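/- arXiv:1101.0410 — 11 statements merged into one kernel-verified Lean document; each statement's English description precedes it below -/
import Mathlib

section
/- Let n and s be positive integers with 1 ≤ s ≤ n. Let a : Fin s → (Fin n → ℝ) be a linearly independent family of vectors (the normal vectors of s hyperplanes) and let b : Fin s → ℝ. Then the number of points x ∈ {0,1}^n (i.e., x : Fin n → ℝ with every coordinate equal to 0 or 1) satisfying ∑_{j} a i j * x j = b i for every i : Fin s is at most 2^(n-s). -/
/-!
The normal vectors form an `s × n` matrix of rank `s`, so some `s` of its columns are linearly
independent. Two solutions that agree outside these columns differ by a vector supported on them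
and killed by the matrix, hence coincide. So a vertex in the intersection is determined by its
remaining `n - s` coordinates, each of which is `0` or `1`.
-/

open Module Submodule Set Matrix

theorem exists_finset_linearIndependent_finrank_span_eq {K V ι : Type*} [Field K]
    [AddCommGroup V] [Module K V] [Finite ι] (v : ι → V) :
    ∃ S : Finset ι, finrank K (span K (range v)) = S.card ∧
      LinearIndependent K fun j : S => v j := by
  obtain ⟨b, -, -, hspan, hli⟩ :=
    exists_linearIndepOn_extension (linearIndepOn_empty K v) (empty_subset univ)
  have hb := b.toFinite
  rw [← hb.coe_toFinset, image_univ] at hspan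
  rw [← hb.coe_toFinset] at hli
  replace hli : LinearIndependent K fun j : hb.toFinset => v j := hli
  have hrange : range (fun j : hb.toFinset => v j) = v '' hb.toFinset := by
    ext; simp
  refine ⟨hb.toFinset, ?_, hli⟩
  rw [← Fintype.card_coe, ← finrank_span_eq_card hli, hrange]
  exact congrArg (fun W : Submodule K V => finrank K W)
    (le_antisymm (span_le.2 hspan) (span_mono (image_subset_range _ _)))

theorem Matrix.eq_of_mulVec_eq_of_eqOn_compl {R m n : Type*} [CommRing R] [Fintype n]
    {A : Matrix m n R} {S : Finset n} (hS : LinearIndependent R fun j : S => A.col j)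
    {x y : n → R} (hxy : A *ᵥ x = A *ᵥ y) (hoff : EqOn x y (↑S)ᶜ) : x = y := by
  have hsum : ∑ j : S, (x - y) j • A.col j = 0 := by
    rw [Finset.sum_coe_sort S fun j => (x - y) j • A.col j,
      Finset.sum_subset (Finset.subset_univ S) fun j _ hj => by simp [hoff hj]]
    ext i
    simpa [Matrix.mulVec, dotProduct, Finset.sum_apply, mul_comm, mul_sub] using
      congrFun (sub_eq_zero.2 hxy) i
  funext j
  by_cases hj : j ∈ S
  · exact sub_eq_zero.1 (Fintype.linearIndependent_iff.1 hS _ hsum ⟨j, hj⟩)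
  · exact hoff hj

theorem ncard_le_two_pow_of_eqOn_imp_eq {ι R : Type*} [Zero R] [One R] {X : Set (ι → R)}
    (h01 : ∀ x ∈ X, ∀ j, x j = 0 ∨ x j = 1) (T : Finset ι)
    (hT : ∀ x ∈ X, ∀ y ∈ X, EqOn x y T → x = y) :
    X.ncard ≤ 2 ^ T.card := by
  classical
  calc X.ncard ≤ Nat.card (T → Bool) := by
        rw [← Nat.card_coe_set_eq]
        refine Nat.card_le_card_of_injective (fun x j => decide (x.1 j = 1)) ?_
        rintro ⟨x, hx⟩ ⟨y, hy⟩ hxy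
        refine Subtype.ext (hT x hx y hy fun j hj => ?_)
        have := congrFun hxy ⟨j, hj⟩
        rcases h01 x hx j with h | h <;> rcases h01 y hy j with h' | h' <;> simp_all
    _ = 2 ^ T.card := by simp [Nat.card_eq_fintype_card]

theorem stmt0_general (n s : ℕ)
    (a : Fin s → (Fin n → ℝ)) (ha : LinearIndependent ℝ a) (b : Fin s → ℝ) :
    {x : Fin n → ℝ | (∀ i, x i = 0 ∨ x i = 1) ∧ ∀ i, ∑ j, a i j * x j = b i}.ncard
      ≤ 2 ^ (n - s) := by
  set A : Matrix (Fin s) (Fin n) ℝ := Matrix.of a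
  obtain ⟨S, hS, hli⟩ := exists_finset_linearIndependent_finrank_span_eq (K := ℝ) A.col
  have hcard : S.card = s := by
    rw [← hS, ← A.rank_eq_finrank_span_cols, LinearIndependent.rank_matrix (M := A) ha,
      Fintype.card_fin]
  calc _ ≤ 2 ^ Sᶜ.card :=
        ncard_le_two_pow_of_eqOn_imp_eq (fun x hx => hx.1) Sᶜ fun x hx y hy hxy =>
          A.eq_of_mulVec_eq_of_eqOn_compl hli (funext fun i => (hx.2 i).trans (hy.2 i).symm)
            (Finset.coe_compl S ▸ hxy)
    _ = 2 ^ (n - s) := by rw [Finset.card_compl, Fintype.card_fin, hcard]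

/-- Theorem 3.3: the intersection of `s` hyperplanes in `ℝ^n` with linearly
independent normal vectors contains at most `2^(n-s)` vertices of the hypercube. -/
theorem stmt0 (n s : ℕ) (hs : 1 ≤ s) (hsn : s ≤ n)
    (a : Fin s → (Fin n → ℝ)) (ha : LinearIndependent ℝ a) (b : Fin s → ℝ) :
    {x : Fin n → ℝ | (∀ i, x i = 0 ∨ x i = 1) ∧ ∀ i, ∑ j, a i j * x j = b i}.ncard
      ≤ 2 ^ (n - s) :=
  stmt0_general n s a ha b
end

section
/- Let n and s be integers with 1 ≤ s ≤ n, and let S be a subset of {0,1}^n ⊆ (Fin n → ℝ) with more than 2^(n-s) elements. Then the dimension of the affine span of S, i.e., Module.finrank ℝ of the direction of affineSpan ℝ S, is at least n - s + 1. -/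
/-!
A subspace of dimension `d` of `K^ι` is determined by `d` of its coordinates: if some vector
is nonzero at coordinate `i`, cutting the subspace down by `vᵢ = 0` lowers its dimension.
Hence the affine span `A` of a set `S` of 0/1-points projects injectively onto `K^T` for some
set `T` of at most `dim A` coordinates, and the image of `S` lies in `{0,1}^T`, so
`#S ≤ 2 ^ dim A`.
-/

open Module

variable {K ι : Type*} [Field K] [Finite ι]

theorem Submodule.exists_determining_coords_card_le_finrank
    (V : Submodule K (ι → K)) :
    ∃ T : Finset ι, T.card ≤ finrank K V ∧ ∀ v ∈ V, (∀ i ∈ T, v i = 0) → v = 0 := by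
  classical
  induction h : finrank K V using Nat.strong_induction_on generalizing V with
  | _ d ih =>
    rcases eq_or_ne V ⊥ with rfl | hV
    · exact ⟨∅, Nat.zero_le _, fun v hv _ => (Submodule.mem_bot K).mp hv⟩
    obtain ⟨v, hvV, hv0⟩ := Submodule.exists_mem_ne_zero_of_ne_bot hV
    obtain ⟨i, hi⟩ : ∃ i, v i ≠ 0 := Function.ne_iff.mp hv0
    set V' := V ⊓ LinearMap.ker (LinearMap.proj (R := K) (φ := fun _ : ι => K) i)
    have hV'V : V' < V := inf_le_left.lt_of_ne fun he => hi (he.ge hvV).2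
    have hrank := Submodule.finrank_lt_finrank_of_lt hV'V
    obtain ⟨T, hTcard, hT⟩ := ih _ (h ▸ hrank) V' rfl
    refine ⟨insert i T, (Finset.card_insert_le _ _).trans (by omega), fun w hw hwT => ?_⟩
    exact hT w ⟨hw, hwT i (Finset.mem_insert_self i T)⟩
      fun j hj => hwT j (Finset.mem_insert_of_mem hj)

theorem ncard_le_card_pow_finrank_direction_affineSpan {S : Set (ι → K)} {Y : Finset K}
    (hY : Y.Nonempty) (hS : ∀ x ∈ S, ∀ i, x i ∈ Y) :
    S.ncard ≤ Y.card ^ finrank K (affineSpan K S).direction := by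
  classical
  obtain ⟨T, hTcard, hT⟩ :=
    (affineSpan K S).direction.exists_determining_coords_card_le_finrank
  have hinj : Set.InjOn (fun x (i : T) => x i) S := by
    intro x hx y hy hxy
    refine sub_eq_zero.mp (hT _ ?_ fun i hi => sub_eq_zero.mpr (congrFun hxy ⟨i, hi⟩))
    exact AffineSubspace.vsub_mem_direction (subset_affineSpan K S hx)
      (subset_affineSpan K S hy)
  calc S.ncard ≤ (Fintype.piFinset fun _ : T => Y : Set (T → K)).ncard :=
        Set.ncard_le_ncard_of_injOn _ (fun x hx => by simpa using fun i _ => hS x hx i) hinj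
          (Finset.finite_toSet _)
    _ = Y.card ^ T.card := by rw [Set.ncard_coe_finset, Fintype.card_piFinset]; simp
    _ ≤ Y.card ^ finrank K (affineSpan K S).direction :=
        Nat.pow_le_pow_right hY.card_pos hTcard

theorem stmt1_general (n s : ℕ)
    (S : Set (Fin n → ℝ)) (hS : ∀ x ∈ S, ∀ i, x i = 0 ∨ x i = 1)
    (hcard : 2 ^ (n - s) < S.ncard) :
    n - s + 1 ≤ Module.finrank ℝ (affineSpan ℝ S).direction := by
  have hS01 : ∀ x ∈ S, ∀ i, x i ∈ ({0, 1} : Finset ℝ) := by simpa using hS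
  have hle := ncard_le_card_pow_finrank_direction_affineSpan (Finset.insert_nonempty _ _) hS01
  rw [Finset.card_pair zero_ne_one] at hle
  exact (Nat.pow_lt_pow_iff_right (by norm_num)).mp (hcard.trans_le hle)

/-- Theorem 3.2: a set of more than `2^(n-s)` vertices of the hypercube has
affine span of dimension at least `n - s + 1`. -/
theorem stmt1 (n s : ℕ) (hs : 1 ≤ s) (hsn : s ≤ n)
    (S : Set (Fin n → ℝ)) (hS : ∀ x ∈ S, ∀ i, x i = 0 ∨ x i = 1)
    (hcard : 2 ^ (n - s) < S.ncard) :
    n - s + 1 ≤ Module.finrank ℝ (affineSpan ℝ S).direction :=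
  stmt1_general n s S hS hcard
end

section
/- Let n ≥ 1 and let S be a subset of {0,1}^n ⊆ (Fin n → ℝ) with more than 2^(n-1) elements. Then affineSpan ℝ S = ⊤, i.e., S affinely spans all of ℝ^n. -/
/-!
If `S` is not full-dimensional, it lies on an affine hyperplane `f x = c` with `f ≠ 0`.
Choosing a coordinate `i` with `f eᵢ ≠ 0`, a point of the hyperplane is determined by its
other coordinates, so deleting coordinate `i` maps `S` injectively into the vertex set of
`Q_{n-1}`, which has `2 ^ (n - 1)` elements.
-/

open Module

theorem exists_dual_ne_zero_eqOn_of_affineSpan_ne_top {K V : Type*} [Field K] [AddCommGroup V]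
    [Module K V] {S : Set V} (hne : S.Nonempty) (hS : affineSpan K S ≠ ⊤) :
    ∃ f : Dual K V, f ≠ 0 ∧ ∃ c, ∀ x ∈ S, f x = c := by
  have hlt : vectorSpan K S < ⊤ := by
    rwa [lt_top_iff_ne_top, Ne,
      ← AffineSubspace.affineSpan_eq_top_iff_vectorSpan_eq_top_of_nonempty K V V hne]
  obtain ⟨x₀, hx₀⟩ := hne
  obtain ⟨f, hf, hmap⟩ := (vectorSpan K S).exists_dual_map_eq_bot_of_lt_top hlt inferInstance
  refine ⟨f, hf, f x₀, fun x hx => ?_⟩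
  have hsub : f (x -ᵥ x₀) ∈ (vectorSpan K S).map f :=
    Submodule.mem_map_of_mem (vsub_mem_vectorSpan K hx hx₀)
  rw [hmap, Submodule.mem_bot, vsub_eq_sub, map_sub, sub_eq_zero] at hsub
  exact hsub

theorem Module.Dual.exists_apply_single_ne_zero {K ι : Type*} [Field K] [Finite ι]
    [DecidableEq ι] {f : Dual K (ι → K)} (hf : f ≠ 0) : ∃ i, f (Pi.single i 1) ≠ 0 := by
  contrapose! hf
  exact (Pi.basisFun K ι).ext fun i => by simpa using hf i

theorem injOn_restrict_compl_of_eqOn {K ι : Type*} [Field K] [DecidableEq ι]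
    {f : Dual K (ι → K)} {i : ι} (hi : f (Pi.single i 1) ≠ 0) {S : Set (ι → K)} {c : K}
    (hS : ∀ x ∈ S, f x = c) : Set.InjOn (fun (x : ι → K) (j : {j // j ≠ i}) => x j) S := by
  intro x hx y hy hxy
  have hdiff : x - y = (x i - y i) • Pi.single i 1 := by
    ext j
    by_cases hj : j = i
    · subst hj; simp
    · simpa [hj, sub_eq_zero] using congrFun hxy ⟨j, hj⟩
  have hfdiff : (x i - y i) * f (Pi.single i 1) = 0 := by
    rw [← smul_eq_mul, ← map_smul, ← hdiff, map_sub, hS x hx, hS y hy, sub_self]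
  rw [← sub_eq_zero, hdiff, sub_eq_zero.mp (mul_eq_zero.mp hfdiff |>.resolve_right hi),
    sub_self, zero_smul]

theorem ncard_hypercube_vertices {K ι : Type*} [MulZeroOneClass K] [Nontrivial K] [Fintype ι] :
    {x : ι → K | ∀ i, x i = 0 ∨ x i = 1}.ncard = 2 ^ Fintype.card ι := by
  classical
  have hpi : {x : ι → K | ∀ i, x i = 0 ∨ x i = 1} =
      ↑(Fintype.piFinset fun _ : ι => ({0, 1} : Finset K)) := by
    ext x; simp
  rw [hpi, Set.ncard_coe_finset, Fintype.card_piFinset]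
  simp

theorem stmt2_general (n : ℕ) (S : Set (Fin n → ℝ))
    (hS : ∀ x ∈ S, ∀ i, x i = 0 ∨ x i = 1)
    (hcard : 2 ^ (n - 1) < S.ncard) :
    affineSpan ℝ S = ⊤ := by
  by_contra htop
  have hne : S.Nonempty := Set.nonempty_of_ncard_ne_zero (Nat.zero_lt_of_lt hcard).ne'
  obtain ⟨f, hf, c, hfc⟩ := exists_dual_ne_zero_eqOn_of_affineSpan_ne_top hne htop
  obtain ⟨i, hi⟩ := Module.Dual.exists_apply_single_ne_zero hf
  have hle : S.ncard ≤ 2 ^ (n - 1) := calc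
    S.ncard ≤ {x : {j // j ≠ i} → ℝ | ∀ j, x j = 0 ∨ x j = 1}.ncard :=
      Set.ncard_le_ncard_of_injOn _ (fun x hx j => hS x hx j)
        (injOn_restrict_compl_of_eqOn hi hfc)
        (Set.finite_of_ncard_pos (by rw [ncard_hypercube_vertices]; positivity))
    _ = 2 ^ (n - 1) := by
      rw [ncard_hypercube_vertices, Fintype.card_subtype_compl, Fintype.card_fin,
        Fintype.card_unique]
  omega

/-- Corollary 3.4: a set of more than `2^(n-1)` vertices of the hypercube
affinely spans all of `ℝ^n`. -/
theorem stmt2 (n : ℕ) (hn : 1 ≤ n) (S : Set (Fin n → ℝ))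
    (hS : ∀ x ∈ S, ∀ i, x i = 0 ∨ x i = 1)
    (hcard : 2 ^ (n - 1) < S.ncard) :
    affineSpan ℝ S = ⊤ :=
  stmt2_general n S hS hcard
end

section
/- Let n ≥ 1, let H be an affine subspace of ℝ^n whose direction has dimension n - 1 (an affine hyperplane), and let S be a subset of {0,1}^n ⊆ (Fin n → ℝ) with more than 2^(n-2) elements such that S ⊆ H. Then affineSpan ℝ S = H. -/
/-!
Restricted to the vector span `W` of a set of cube vertices, some `dim W` coordinates already
determine a vector: the coordinate functionals span `W*`, so a basis of `W*` can be picked among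
them. Two vertices agreeing on these coordinates differ by a vector of `W` vanishing there, hence
coincide, so there are at most `2 ^ dim W` vertices. A proper affine subspace of the hyperplane
`H` has dimension at most `n - 2` and therefore contains at most `2 ^ (n - 2)` vertices.
-/

open Module

theorem Submodule.exists_card_le_finrank_eq_zero_of_coords_eq_zero {K ι : Type*} [Field K] [Finite ι]
    (W : Submodule K (ι → K)) :
    ∃ I : Set ι, Nat.card I ≤ finrank K W ∧ ∀ v ∈ W, (∀ i ∈ I, v i = 0) → v = 0 := by
  let coord : ι → Dual K W := fun i => (LinearMap.proj i).comp W.subtype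
  obtain ⟨κ, a, ha, hspan, hli⟩ := exists_linearIndependent' K coord
  have : Finite κ := Finite.of_injective a ha
  have : Fintype κ := Fintype.ofFinite κ
  refine ⟨Set.range a, ?_, fun v hv hvI => funext fun j => ?_⟩
  · rw [Nat.card_range_of_injective ha, Nat.card_eq_fintype_card, ← Subspace.dual_finrank_eq]
    exact hli.fintype_card_le_finrank
  · have hker : Submodule.span K (Set.range (coord ∘ a)) ≤
        LinearMap.ker (Dual.eval K W ⟨v, hv⟩) := by
      rw [Submodule.span_le]
      rintro _ ⟨k, rfl⟩
      exact hvI (a k) ⟨k, rfl⟩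
    rw [hspan] at hker
    exact hker (Submodule.subset_span ⟨j, rfl⟩)

theorem ncard_le_two_pow_finrank_vectorSpan {K ι : Type*} [Field K] [Finite ι]
    (S : Set (ι → K)) (hS : ∀ x ∈ S, ∀ i, x i = 0 ∨ x i = 1) :
    S.ncard ≤ 2 ^ finrank K (vectorSpan K S) := by
  obtain ⟨I, hIcard, hI⟩ := (vectorSpan K S).exists_card_le_finrank_eq_zero_of_coords_eq_zero
  let pattern : S → I → Prop := fun x i => (x : ι → K) i = 1
  have hinj : Function.Injective pattern := by
    intro x y hxy
    have hagree : ∀ i ∈ I, (x - y : ι → K) i = 0 := fun i hi => by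
      have hiff : (x : ι → K) i = 1 ↔ (y : ι → K) i = 1 := iff_of_eq (congrFun hxy ⟨i, hi⟩)
      rcases hS x x.2 i with hx | hx <;> rcases hS y y.2 i with hy | hy <;>
        simp_all
    exact Subtype.ext (sub_eq_zero.mp (hI _ (vsub_mem_vectorSpan K x.2 y.2) hagree))
  calc S.ncard = Nat.card S := (Nat.card_coe_set_eq S).symm
    _ ≤ Nat.card (I → Prop) := Nat.card_le_card_of_injective pattern hinj
    _ = 2 ^ Nat.card I := by simp [Nat.card_fun]
    _ ≤ 2 ^ finrank K (vectorSpan K S) := Nat.pow_le_pow_right two_pos hIcard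

theorem stmt3_general (n : ℕ) (H : AffineSubspace ℝ (Fin n → ℝ))
    (hH : Module.finrank ℝ H.direction = n - 1)
    (S : Set (Fin n → ℝ)) (hS : ∀ x ∈ S, ∀ i, x i = 0 ∨ x i = 1)
    (hSH : S ⊆ (H : Set (Fin n → ℝ)))
    (hcard : 2 ^ (n - 2) < S.ncard) :
    affineSpan ℝ S = H := by
  have hle : affineSpan ℝ S ≤ H := affineSpan_le.mpr hSH
  have hne : (affineSpan ℝ S : Set (Fin n → ℝ)).Nonempty :=
    (affineSpan_nonempty ℝ).mpr (Set.nonempty_of_ncard_ne_zero (Nat.ne_zero_of_lt hcard))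
  refine AffineSubspace.eq_of_direction_eq_of_nonempty_of_le ?_ hne hle
  refine Submodule.eq_of_le_of_finrank_le (AffineSubspace.direction_le hle) ?_
  have hdim : n - 2 < finrank ℝ (vectorSpan ℝ S) :=
    (Nat.pow_lt_pow_iff_right (by norm_num)).mp
      (hcard.trans_le (ncard_le_two_pow_finrank_vectorSpan S hS))
  rw [direction_affineSpan, hH]
  omega

/-- A set of more than `2^(n-2)` vertices of the hypercube contained in an
affine hyperplane `H` has affine span equal to `H`. -/
theorem stmt3 (n : ℕ) (hn : 1 ≤ n) (H : AffineSubspace ℝ (Fin n → ℝ))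
    (hH : Module.finrank ℝ H.direction = n - 1)
    (S : Set (Fin n → ℝ)) (hS : ∀ x ∈ S, ∀ i, x i = 0 ∨ x i = 1)
    (hSH : S ⊆ (H : Set (Fin n → ℝ)))
    (hcard : 2 ^ (n - 2) < S.ncard) :
    affineSpan ℝ S = H :=
  stmt3_general n H hH S hS hSH hcard
end

section
/- Let n ≥ 2 and let H_1, H_2, ..., H_m (m ≥ 2) be affine hyperplanes in ℝ^n (affine subspaces whose directions have dimension n - 1) with H_1 ≠ H_2. If the intersection ⋂_{i=1}^m H_i contains more than 2^(n-3) points of {0,1}^n, then ⋂_{i=1}^m H_i = H_1 ⊓ H_2 (the intersection of the first two hyperplanes alone). -/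
/-!
An affine subspace whose direction has dimension `d` contains at most `2 ^ d` vertices of the
cube: if it contains two vertices differing in coordinate `i`, then slicing by `x i = 0` and
`x i = 1` splits its vertices between two affine subspaces of smaller dimension. So an
intersection of hyperplanes with more than `2 ^ (n - 3)` vertices has dimension at least
`n - 2`. It lies in `H₀ ⊓ H₁`, which has dimension exactly `n - 2` because the distinct
hyperplanes `H₀` and `H₁` meet, so the two coincide.
-/

open Set Module AffineSubspace

variable {K ι : Type*} [Field K]

def hypercube (K ι : Type*) [Zero K] [One K] : Set (ι → K) := {x | ∀ i, x i = 0 ∨ x i = 1}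

theorem hypercube_finite [Finite ι] : (hypercube K ι).Finite :=
  Finite.pi' fun _ => (finite_singleton 1).insert 0

def coordHyperplane (i : ι) (c : K) : AffineSubspace K (ι → K) :=
  AffineSubspace.mk' (fun _ => c) (LinearMap.ker (LinearMap.proj i))

theorem mem_coordHyperplane {i : ι} {c : K} {x : ι → K} :
    x ∈ coordHyperplane i c ↔ x i = c := by
  simp [coordHyperplane, sub_eq_zero]

theorem direction_coordHyperplane (i : ι) (c : K) :
    (coordHyperplane i c).direction = LinearMap.ker (LinearMap.proj i) :=
  direction_mk' _ _

theorem hypercube_inter_eq_union (A : AffineSubspace K (ι → K)) (i : ι) :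
    hypercube K ι ∩ A = (hypercube K ι ∩ ↑(A ⊓ coordHyperplane i 0)) ∪
      (hypercube K ι ∩ ↑(A ⊓ coordHyperplane i 1)) := by
  ext x
  simp only [mem_union, mem_inter_iff, SetLike.mem_coe, mem_inf_iff, mem_coordHyperplane]
  constructor
  · rintro ⟨hx, hxA⟩
    rcases hx i with h | h
    exacts [Or.inl ⟨hx, hxA, h⟩, Or.inr ⟨hx, hxA, h⟩]
  · rintro (⟨hx, hxA, -⟩ | ⟨hx, hxA, -⟩) <;> exact ⟨hx, hxA⟩

theorem AffineSubspace.finrank_direction_inf_lt {V P : Type*} [AddCommGroup V] [Module K V]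
    [AddTorsor V P] {A B : AffineSubspace K P} [FiniteDimensional K A.direction] {v : V}
    (hvA : v ∈ A.direction) (hvB : v ∉ B.direction) :
    finrank K (A ⊓ B).direction < finrank K A.direction :=
  Submodule.finrank_lt_finrank_of_lt <|
    (direction_inf A B).trans_lt <| inf_lt_left.mpr fun h => hvB (h hvA)

theorem ncard_hypercube_inter_le [Finite ι] (A : AffineSubspace K (ι → K)) :
    (hypercube K ι ∩ A).ncard ≤ 2 ^ finrank K A.direction := by
  induction hd : finrank K A.direction using Nat.strong_induction_on generalizing A with
  | _ d ih =>
  rcases (hypercube K ι ∩ A).subsingleton_or_nontrivial with hsub | ⟨x, hx, y, hy, hxy⟩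
  · exact ((ncard_le_one (hypercube_finite.subset inter_subset_left)).mpr hsub).trans
      Nat.one_le_two_pow
  obtain ⟨i, hi⟩ := Function.ne_iff.mp hxy
  have hslice_lt (c : K) : finrank K (A ⊓ coordHyperplane i c).direction < d := by
    refine hd ▸ finrank_direction_inf_lt (vsub_mem_direction hx.2 hy.2) ?_
    simpa [direction_coordHyperplane, sub_eq_zero] using hi
  obtain ⟨d, rfl⟩ := Nat.exists_eq_add_one.mpr (Nat.zero_lt_of_lt (hslice_lt 0))
  have hslice (c : K) : (hypercube K ι ∩ ↑(A ⊓ coordHyperplane i c)).ncard ≤ 2 ^ d :=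
    (ih _ (hslice_lt c) _ rfl).trans <|
      Nat.pow_le_pow_right two_pos (Nat.le_of_lt_succ (hslice_lt c))
  calc (hypercube K ι ∩ A).ncard
      ≤ (hypercube K ι ∩ ↑(A ⊓ coordHyperplane i 0)).ncard +
          (hypercube K ι ∩ ↑(A ⊓ coordHyperplane i 1)).ncard :=
        hypercube_inter_eq_union A i ▸ ncard_union_le _ _
    _ ≤ 2 ^ d + 2 ^ d := Nat.add_le_add (hslice 0) (hslice 1)
    _ = 2 ^ (d + 1) := by ring

theorem Submodule.finrank_inf_of_finrank_eq_pred {V : Type*} [AddCommGroup V] [Module K V]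
    [FiniteDimensional K V] {W₁ W₂ : Submodule K V} (hne : W₁ ≠ W₂)
    (h₁ : finrank K W₁ = finrank K V - 1) (h₂ : finrank K W₂ = finrank K V - 1) :
    finrank K ↥(W₁ ⊓ W₂) = finrank K V - 2 := by
  have hlt : W₁ < W₁ ⊔ W₂ := left_lt_sup.mpr fun h =>
    hne (eq_of_le_of_finrank_le h (by rw [h₁, h₂])).symm
  have := finrank_lt_finrank_of_lt hlt
  have := (W₁ ⊔ W₂).finrank_le
  have := finrank_sup_add_finrank_inf_eq W₁ W₂
  omega

theorem AffineSubspace.finrank_direction_inf_of_finrank_eq_pred {V P : Type*} [AddCommGroup V]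
    [Module K V] [FiniteDimensional K V] [AddTorsor V P] {H₁ H₂ : AffineSubspace K P} {p : P}
    (hp : p ∈ H₁ ⊓ H₂) (hne : H₁ ≠ H₂)
    (h₁ : finrank K H₁.direction = finrank K V - 1)
    (h₂ : finrank K H₂.direction = finrank K V - 1) :
    finrank K (H₁ ⊓ H₂).direction = finrank K V - 2 := by
  rw [direction_inf_of_mem_inf hp]
  exact Submodule.finrank_inf_of_finrank_eq_pred
    (fun h => hne (ext_of_direction_eq h ⟨p, hp⟩)) h₁ h₂

theorem stmt5_general (n m : ℕ) (hm : 2 ≤ m)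
    (H : Fin m → AffineSubspace ℝ (Fin n → ℝ))
    (hH : ∀ i, Module.finrank ℝ (H i).direction = n - 1)
    (hne : H ⟨0, lt_of_lt_of_le Nat.zero_lt_two hm⟩ ≠
      H ⟨1, lt_of_lt_of_le Nat.one_lt_two hm⟩)
    (hcard : 2 ^ (n - 3) <
      ({x : Fin n → ℝ | ∀ i, x i = 0 ∨ x i = 1} ∩ ↑(⨅ i, H i)).ncard) :
    (⨅ i, H i) = H ⟨0, lt_of_lt_of_le Nat.zero_lt_two hm⟩ ⊓
      H ⟨1, lt_of_lt_of_le Nat.one_lt_two hm⟩ := by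
  have hle : (⨅ i, H i) ≤ H ⟨0, by omega⟩ ⊓ H ⟨1, by omega⟩ :=
    le_inf (iInf_le H _) (iInf_le H _)
  obtain ⟨p, -, hp⟩ := nonempty_of_ncard_ne_zero (Nat.ne_zero_of_lt hcard)
  have hrank : n - 2 ≤ finrank ℝ (⨅ i, H i).direction := by
    have := (Nat.pow_lt_pow_iff_right one_lt_two).mp
      (hcard.trans_le (ncard_hypercube_inter_le (⨅ i, H i)))
    omega
  refine eq_of_direction_eq_of_nonempty_of_le ?_ ⟨p, hp⟩ hle
  refine Submodule.eq_of_le_of_finrank_le (direction_le hle) ?_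
  rwa [finrank_direction_inf_of_finrank_eq_pred (hle hp) hne (by simp [hH]) (by simp [hH]),
    finrank_fin_fun]

/-- If an intersection of affine hyperplanes `H 0, …, H (m-1)` with `H 0 ≠ H 1`
contains more than `2^(n-3)` hypercube vertices, then it equals `H 0 ⊓ H 1`. -/
theorem stmt5 (n m : ℕ) (hn : 2 ≤ n) (hm : 2 ≤ m)
    (H : Fin m → AffineSubspace ℝ (Fin n → ℝ))
    (hH : ∀ i, Module.finrank ℝ (H i).direction = n - 1)
    (hne : H ⟨0, lt_of_lt_of_le Nat.zero_lt_two hm⟩ ≠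
      H ⟨1, lt_of_lt_of_le Nat.one_lt_two hm⟩)
    (hcard : 2 ^ (n - 3) <
      ({x : Fin n → ℝ | ∀ i, x i = 0 ∨ x i = 1} ∩ ↑(⨅ i, H i)).ncard) :
    (⨅ i, H i) = H ⟨0, lt_of_lt_of_le Nat.zero_lt_two hm⟩ ⊓
      H ⟨1, lt_of_lt_of_le Nat.one_lt_two hm⟩ :=
  stmt5_general n m hm H hH hne hcard
end

section
/- Let X be a finite type, let g be a permutation of X (g : Equiv.Perm X), and let i ≥ 2 be an integer. Then, as integers, i * (the number of cycles of length i in the cycle decomposition of g, i.e., Multiset.count i g.cycleType) = ∑_{j ∣ i} μ(i/j) * (the number of fixed points of g^j), where μ is the classical number-theoretic Möbius function and the sum is over the positive divisors j of i. -/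
/-!
A point is fixed by `g ^ n` exactly when the length of its `g`-orbit divides `n`, so
`ψ(g ^ n) = ∑_{d ∣ n} a_d`, where `a_d` counts the points with orbit length `d`. Möbius inversion
expresses `a_i` through the `ψ(g ^ j)`, and for `i ≥ 2` the points with orbit length `i` are
exactly the points moved by the `i`-cycles of `g`, so `a_i = i c_i`.
-/

open Finset Function

lemma card_filter_iterate_eq_self_eq_sum_divisors {α : Type*} [Fintype α] [DecidableEq α]
    (f : α → α) {n : ℕ} (hn : n ≠ 0) :
    #{x | f^[n] x = x} = ∑ d ∈ n.divisors, #{x | minimalPeriod f x = d} := by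
  have hfix (x : α) : f^[n] x = x ↔ minimalPeriod f x ∈ n.divisors := by
    rw [Nat.mem_divisors, ← isPeriodicPt_iff_minimalPeriod_dvd]
    exact (and_iff_left hn).symm
  simp_rw [hfix]
  rw [card_eq_sum_card_fiberwise (f := minimalPeriod f) (t := n.divisors)
    fun x hx => by simpa using hx]
  refine sum_congr rfl fun d hd => congrArg card ?_
  ext x
  simp only [mem_filter, mem_univ, true_and, and_iff_right_iff_imp]
  rintro rfl
  exact hd

namespace Equiv.Perm

variable {α : Type*} [Fintype α] [DecidableEq α]

theorem minimalPeriod_eq_card_support_cycleOf (g : Perm α) {x : α} (hx : g x ≠ x) :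
    minimalPeriod g x = #(g.cycleOf x).support := by
  have hc : (g.cycleOf x).IsCycle := g.isCycle_cycleOf hx
  have hperiodic (n : ℕ) : IsPeriodicPt g n x ↔ orderOf (g.cycleOf x) ∣ n := by
    rw [IsPeriodicPt, IsFixedPt, iterate_eq_pow, ← cycleOf_pow_apply_self,
      orderOf_dvd_iff_pow_eq_one, hc.pow_eq_one_iff' (by rwa [cycleOf_apply_self])]
  rw [← hc.orderOf]
  exact Nat.dvd_antisymm ((hperiodic _).mpr dvd_rfl).minimalPeriod_dvd
    ((hperiodic _).mp (isPeriodicPt_minimalPeriod g x))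

theorem count_cycleType_eq_card_filter (g : Perm α) (n : ℕ) :
    g.cycleType.count n = #{c ∈ g.cycleFactorsFinset | #c.support = n} := by
  rw [cycleType_def, Multiset.count_map, Finset.card, Finset.filter_val]
  exact congrArg _ (Multiset.filter_congr fun c _ => eq_comm)

theorem filter_minimalPeriod_eq_biUnion (g : Perm α) {n : ℕ} (hn : 2 ≤ n) :
    ({x | minimalPeriod g x = n} : Finset α) =
      {c ∈ g.cycleFactorsFinset | #c.support = n}.biUnion support := by
  ext x
  simp only [mem_filter, mem_univ, true_and, mem_biUnion]
  constructor
  · intro h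
    have hx : g x ≠ x := fun hfix => by
      rw [minimalPeriod_eq_one_iff_isFixedPt.mpr hfix] at h
      omega
    refine ⟨g.cycleOf x, ⟨cycleOf_mem_cycleFactorsFinset_iff.mpr (mem_support.mpr hx),
      by rw [← minimalPeriod_eq_card_support_cycleOf g hx, h]⟩, ?_⟩
    exact mem_support_cycleOf_iff.mpr ⟨SameCycle.refl _ _, mem_support.mpr hx⟩
  · rintro ⟨c, ⟨hc, rfl⟩, hxc⟩
    obtain rfl := cycle_is_cycleOf hxc hc
    rw [minimalPeriod_eq_card_support_cycleOf g (mem_support.mp (support_cycleOf_le g x hxc))]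

theorem card_filter_minimalPeriod_eq (g : Perm α) {n : ℕ} (hn : 2 ≤ n) :
    #{x | minimalPeriod g x = n} = n * g.cycleType.count n := by
  rw [filter_minimalPeriod_eq_biUnion g hn, card_biUnion,
    sum_congr rfl fun c hc => (mem_filter.mp hc).2, sum_const, smul_eq_mul,
    count_cycleType_eq_card_filter, mul_comm]
  intro c hc c' hc' hne
  exact (g.cycleFactorsFinset_pairwise_disjoint (mem_filter.mp hc).1 (mem_filter.mp hc').1
    hne).disjoint_support

end Equiv.Perm

/-- Theorem 2.1 (Chen): `i` times the number of `i`-cycles of a permutation `g`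
equals `∑_{j ∣ i} μ(i/j) ψ(g^j)`, where `ψ` counts fixed points. -/
theorem stmt7 (X : Type*) [Fintype X] [DecidableEq X] (g : Equiv.Perm X)
    (i : ℕ) (hi : 2 ≤ i) :
    (i : ℤ) * (Multiset.count i g.cycleType : ℤ) =
      ∑ j ∈ Nat.divisors i,
        ArithmeticFunction.moebius (i / j) *
          ((Finset.univ.filter fun x => (g ^ j) x = x).card : ℤ) := by
  have hfix (n : ℕ) (hn : 0 < n) :
      ∑ d ∈ n.divisors, (#{x | minimalPeriod g x = d} : ℤ) = #{x | (g ^ n) x = x} := by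
    rw [← Equiv.Perm.iterate_eq_pow]
    exact_mod_cast (card_filter_iterate_eq_self_eq_sum_divisors g hn.ne').symm
  have hinv := ArithmeticFunction.sum_eq_iff_sum_mul_moebius_eq.mp hfix i (by omega)
  simp only [Int.cast_id] at hinv
  rw [← Nat.sum_divisorsAntidiagonal'
      (f := fun a b => ArithmeticFunction.moebius a * (#{x | (g ^ b) x = x} : ℤ)),
    hinv, Equiv.Perm.card_filter_minimalPeriod_eq g hi]
  push_cast
  ring
end

section
/- Let α and β be finite types, let σ be a permutation of α and τ a permutation of β, and let (x, y) ∈ α × β. Then the cardinality of the orbit of (x, y) under the permutation of α × β given by (x, y) ↦ (σ x, τ y) (i.e., Equiv.prodCongr σ τ) equals Nat.lcm of the cardinality of the orbit of x under σ and the cardinality of the orbit of y under τ. -/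
open Function MulAction

/- The orbit of `z` under `⟨π⟩` is in bijection with `ZMod (minimalPeriod π z)`; this holds also
for an infinite orbit, where `ncard` and `minimalPeriod` both take the value `0`. -/
theorem Equiv.Perm.ncard_range_zpow_apply {γ : Type*} (π : Equiv.Perm γ) (z : γ) :
    (Set.range fun k : ℤ => (π ^ k) z).ncard = minimalPeriod π z := by
  have hrange : (Set.range fun k : ℤ => (π ^ k) z) = orbit (Subgroup.zpowers π) z := by
    ext w
    constructor
    · rintro ⟨k, rfl⟩
      exact ⟨⟨π ^ k, k, rfl⟩, rfl⟩
    · rintro ⟨⟨_, k, rfl⟩, rfl⟩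
      exact ⟨k, rfl⟩
  rw [hrange, ← Nat.card_coe_set_eq, Nat.card_congr (orbitZPowersEquiv π z), Nat.card_zmod]
  rfl

theorem stmt8_general (α β : Type*)
    (σ : Equiv.Perm α) (τ : Equiv.Perm β) (x : α) (y : β) :
    (Set.range fun k : ℤ => ((σ.prodCongr τ) ^ k) (x, y)).ncard =
      Nat.lcm (Set.range fun k : ℤ => (σ ^ k) x).ncard
        (Set.range fun k : ℤ => (τ ^ k) y).ncard := by
  simp only [Equiv.Perm.ncard_range_zpow_apply, Equiv.prodCongr_apply]
  exact minimalPeriod_prodMap σ τ (x, y)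

/-- Lemma 6.1 (core): the orbit of `(x, y)` under `σ × τ` has size the least
common multiple of the orbit sizes of `x` under `σ` and of `y` under `τ`. -/
theorem stmt8 (α β : Type*) [Fintype α] [Fintype β]
    (σ : Equiv.Perm α) (τ : Equiv.Perm β) (x : α) (y : β) :
    (Set.range fun k : ℤ => ((σ.prodCongr τ) ^ k) (x, y)).ncard =
      Nat.lcm (Set.range fun k : ℤ => (σ ^ k) x).ncard
        (Set.range fun k : ℤ => (τ ^ k) y).ncard :=
  stmt8_general α β σ τ x y
end

section
/- Let n ≥ 1 and t with 1 ≤ t ≤ n. Let a : Fin n → ℝ satisfy a i > 0 for all i with (i : ℕ) < t and a i = 0 for all i with (i : ℕ) ≥ t, and let b : ℝ. Let H = {x : Fin n → ℝ | ∑ i, a i * x i = b}, and assume H is a spanned hyperplane of Q_n, i.e., the affine span over ℝ of {0,1}^n ∩ H has direction of dimension n - 1. For a permutation π of Fin n and a sign vector ε : Fin n → Bool, let f_{π,ε} : (Fin n → ℝ) → (Fin n → ℝ) be defined by (f_{π,ε} x) i = x (π i) if ε i = false and (f_{π,ε} x) i = 1 - x (π i) if ε i = true. Then f_{π,ε} maps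 H onto H (i.e., f_{π,ε} '' H = H) if and only if: (∀ i with (i : ℕ) < t, a (π i) = a i) and, moreover, either ε i = false for all i with (i : ℕ) < t, or (ε i = true for all i with (i : ℕ) < t and ∑ i, a i = 2 * b). -/
/-!
A signed permutation `f` is an affine bijection, so `f '' H = H` iff `f ⁻¹' H = H`, and
`f ⁻¹' H` is the hyperplane `∑ⱼ ±a (π⁻¹ j) * x j = b - ∑_{ε i} a i`. Two hyperplanes with the
same points have proportional equations, so `±a i = l * a (π i)` for all `i`. Summing absolute
values against `∑ a i > 0` forces `|l| = 1`; hence `a ∘ π = a`, the sign of `ε` is constant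
(that of `l`) on the support of `a`, and for `l = -1` the constant terms give `b - ∑ a i = -b`.
-/

open Finset

theorem Module.Dual.setOf_eq_setOf_iff {K V : Type*} [Field K] [AddCommGroup V] [Module K V]
    {f g : Module.Dual K V} (hf : f ≠ 0) {b c : K} :
    {x | g x = c} = {x | f x = b} ↔ ∃ l ≠ 0, g = l • f ∧ c = l * b := by
  constructor
  · intro h
    have hmem : ∀ x, g x = c ↔ f x = b := fun x => Set.ext_iff.mp h x
    obtain ⟨x₀, hx₀⟩ := LinearMap.surjective_of_ne_zero hf b
    have hgx₀ : g x₀ = c := (hmem x₀).mpr hx₀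
    have hker : LinearMap.ker f ≤ LinearMap.ker g := fun v hv => by
      have := (hmem (x₀ + v)).mpr (by rw [map_add, hx₀, LinearMap.mem_ker.mp hv, add_zero])
      rwa [map_add, hgx₀, add_eq_left] at this
    obtain ⟨l, hl⟩ : ∃ l : K, l • f = g := by
      simpa [Submodule.mem_span_singleton] using
        mem_span_of_iInf_ker_le_ker (L := fun _ : Unit => f) (by simpa using hker)
    have hc : c = l * b := by rw [← hgx₀, ← hl, LinearMap.smul_apply, hx₀, smul_eq_mul]
    refine ⟨l, fun hl0 => ?_, hl.symm, hc⟩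
    obtain ⟨v, hv⟩ := LinearMap.surjective_of_ne_zero hf 1
    have := (hmem (x₀ + v)).mp (by simp [← hl, hl0, hc])
    simp_all
  · rintro ⟨l, hl, rfl, rfl⟩
    ext x
    simp [hl]

theorem setOf_sum_mul_eq_iff {K ι : Type*} [Field K] [Fintype ι] {a c : ι → K} (ha : a ≠ 0)
    {b β : K} :
    {x : ι → K | ∑ i, c i * x i = β} = {x | ∑ i, a i * x i = b} ↔
      ∃ l ≠ 0, c = l • a ∧ β = l * b := by
  classical
  have := Module.Dual.setOf_eq_setOf_iff (g := dotProductEquiv K ι c) (c := β) (b := b)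
    ((dotProductEquiv K ι).map_ne_zero_iff.mpr ha)
  simpa [dotProduct, ← map_smul, (dotProductEquiv K ι).injective.eq_iff] using this

theorem ite_neg_eq_ite_mul_iff {a : ℝ} (ha : 0 ≤ a) (e s : Bool) :
    (0 < a → e = s) ↔ (if e then -a else a) = (if s then -1 else 1) * a := by
  rcases ha.eq_or_lt with rfl | ha <;> cases e <;> cases s <;> grind

theorem forall_pos_imp_apply_perm_eq_iff {ι : Type*} [Fintype ι] {a : ι → ℝ} (ha : 0 ≤ a)
    (π : Equiv.Perm ι) : (∀ i, 0 < a i → a (π i) = a i) ↔ ∀ i, a (π i) = a i := by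
  refine ⟨fun h => ?_, fun h i _ => h i⟩
  have hle : ∀ i ∈ univ, a i ≤ a (π i) := fun i _ => by
    rcases (ha i).eq_or_lt with h0 | hpos
    · rw [← h0]; exact ha (π i)
    · rw [h i hpos]
  intro i
  exact ((sum_eq_sum_iff_of_le hle).mp (Equiv.sum_comp π a).symm i (mem_univ i)).symm

section SignedPerm

variable {ι : Type*} (π : Equiv.Perm ι) (ε : ι → Bool)

def signedPerm (x : ι → ℝ) : ι → ℝ := fun i => if ε i then 1 - x (π i) else x (π i)

theorem signedPerm_bijective : Function.Bijective (signedPerm π ε) := by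
  refine ⟨fun x y hxy => funext fun j => ?_, fun y => ⟨fun j =>
    if ε (π.symm j) then 1 - y (π.symm j) else y (π.symm j), ?_⟩⟩
  · have := congr_fun hxy (π.symm j)
    simp only [signedPerm, Equiv.apply_symm_apply] at this
    split_ifs at this <;> linarith
  · funext i
    simp only [signedPerm, Equiv.symm_apply_apply]
    split_ifs <;> ring

variable [Fintype ι]

theorem signedPerm_preimage_setOf (a : ι → ℝ) (b : ℝ) :
    signedPerm π ε ⁻¹' {x | ∑ i, a i * x i = b} =
      {x | ∑ j, (if ε (π.symm j) then -a (π.symm j) else a (π.symm j)) * x j =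
        b - ∑ i, if ε i then a i else 0} := by
  ext x
  have hsplit : ∑ i, a i * signedPerm π ε x i =
      ∑ i, (if ε i then a i else 0) + ∑ i, (if ε i then -a i else a i) * x (π i) := by
    rw [← sum_add_distrib]
    exact sum_congr rfl fun i _ => by simp only [signedPerm]; split_ifs <;> ring
  rw [Set.mem_preimage, Set.mem_ofPred_eq, Set.mem_ofPred_eq, hsplit,
    ← Equiv.sum_comp π.symm (fun i => (if ε i then -a i else a i) * x (π i))]
  simp only [Equiv.apply_symm_apply]
  constructor <;> intro h <;> linarith

theorem sum_ite_eq_ite_sum_of_forall_pos {a : ι → ℝ} (ha : 0 ≤ a) {s : Bool}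
    (h : ∀ i, 0 < a i → ε i = s) :
    ∑ i, (if ε i then a i else 0) = if s then ∑ i, a i else 0 := by
  have hterm : ∀ i, (if ε i then a i else 0) = if s then a i else 0 := fun i => by
    rcases (ha i).eq_or_lt with h0 | hpos
    · simp [← h0]
    · rw [h i hpos]
  rw [sum_congr rfl fun i _ => hterm i]
  cases s <;> simp

theorem eq_one_of_forall_eq_mul_apply_perm {a : ι → ℝ} (ha : 0 ≤ a) (ha₀ : a ≠ 0) {c : ℝ}
    (h : ∀ i, a i = c * a (π i)) : c = 1 := by
  have hsum : 0 < ∑ i, a i := Fintype.sum_pos (lt_of_le_of_ne ha (Ne.symm ha₀))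
  have : ∑ i, a i = c * ∑ i, a i := by
    rw [mul_sum, ← Equiv.sum_comp π (fun i => c * a i)]
    exact sum_congr rfl fun i _ => h i
  nlinarith

theorem signedPerm_image_setOf_eq_iff {a : ι → ℝ} (ha : 0 ≤ a) (ha₀ : a ≠ 0) (b : ℝ) :
    signedPerm π ε '' {x | ∑ i, a i * x i = b} = {x | ∑ i, a i * x i = b} ↔
      (∀ i, a (π i) = a i) ∧ ((∀ i, 0 < a i → ε i = false) ∨
        ((∀ i, 0 < a i → ε i = true) ∧ ∑ i, a i = 2 * b)) := by
  rw [← Set.eq_preimage_iff_image_eq (signedPerm_bijective π ε), eq_comm,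
    signedPerm_preimage_setOf, setOf_sum_mul_eq_iff ha₀]
  have hcoef : ∀ l : ℝ,
      (fun j => if ε (π.symm j) then -a (π.symm j) else a (π.symm j)) = l • a ↔
        ∀ i, (if ε i then -a i else a i) = l * a (π i) := fun l => by
    rw [funext_iff, ← π.forall_congr_right]
    simp
  constructor
  · rintro ⟨l, -, hd, hB⟩
    rw [hcoef] at hd
    have habs : ∀ i, a i = |l| * a (π i) := fun i => by
      have := congr_arg abs (hd i)
      rwa [apply_ite abs, abs_neg, ite_self, abs_mul, abs_of_nonneg (ha _),
        abs_of_nonneg (ha _)] at this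
    have hl : |l| = 1 := eq_one_of_forall_eq_mul_apply_perm π ha ha₀ habs
    have hπ : ∀ i, a (π i) = a i := fun i => by simpa [hl] using (habs i).symm
    refine ⟨hπ, ?_⟩
    simp only [hπ] at hd
    rcases (abs_eq zero_le_one).mp hl with rfl | rfl
    · exact Or.inl fun i =>
        (ite_neg_eq_ite_mul_iff (ha i) (ε i) false).mpr (by simpa using hd i)
    · have hε : ∀ i, 0 < a i → ε i = true := fun i =>
        (ite_neg_eq_ite_mul_iff (ha i) (ε i) true).mpr (by simpa using hd i)
      rw [sum_ite_eq_ite_sum_of_forall_pos ε ha hε, if_pos rfl] at hB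
      exact Or.inr ⟨hε, by linarith⟩
  · rintro ⟨hπ, hε | ⟨hε, hsum⟩⟩
    · refine ⟨1, one_ne_zero, (hcoef 1).mpr fun i => ?_, ?_⟩
      · simpa [hπ] using (ite_neg_eq_ite_mul_iff (ha i) (ε i) false).mp (hε i)
      · rw [sum_ite_eq_ite_sum_of_forall_pos ε ha hε]
        simp
    · refine ⟨-1, by norm_num, (hcoef _).mpr fun i => ?_, ?_⟩
      · simpa [hπ] using (ite_neg_eq_ite_mul_iff (ha i) (ε i) true).mp (hε i)
      · rw [sum_ite_eq_ite_sum_of_forall_pos ε ha hε, if_pos rfl, hsum]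
        ring

end SignedPerm

theorem stmt10_general (n t : ℕ) (hn : 1 ≤ n) (ht : 1 ≤ t)
    (a : Fin n → ℝ) (hpos : ∀ i : Fin n, (i : ℕ) < t → 0 < a i)
    (hzero : ∀ i : Fin n, t ≤ (i : ℕ) → a i = 0) (b : ℝ)
    (π : Equiv.Perm (Fin n)) (ε : Fin n → Bool) :
    (fun x : Fin n → ℝ => fun i => if ε i then 1 - x (π i) else x (π i)) ''
        {x | ∑ i, a i * x i = b} = {x | ∑ i, a i * x i = b} ↔
      (∀ i : Fin n, (i : ℕ) < t → a (π i) = a i) ∧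
        ((∀ i : Fin n, (i : ℕ) < t → ε i = false) ∨
          ((∀ i : Fin n, (i : ℕ) < t → ε i = true) ∧ ∑ i, a i = 2 * b)) := by
  have hsupp : ∀ i : Fin n, (i : ℕ) < t ↔ 0 < a i := fun i =>
    ⟨hpos i, fun h => by_contra fun hi => h.ne' (hzero i (not_lt.mp hi))⟩
  have ha : 0 ≤ a := fun i =>
    (lt_or_ge (i : ℕ) t).elim (fun h => (hpos i h).le) (fun h => (hzero i h).ge)
  have ha₀ : a ≠ 0 := fun h => (hpos ⟨0, hn⟩ ht).ne' (congr_fun h _)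
  simp only [hsupp]
  rw [forall_pos_imp_apply_perm_eq_iff ha]
  exact signedPerm_image_setOf_eq_iff π ε ha ha₀ b

/-- Theorem 5.1: a signed permutation `f_{π,ε}` fixes the spanned hyperplane
`a₁x₁ + ⋯ + aₜxₜ = b` iff it permutes coordinates with equal coefficients and
carries either all plus signs, or all minus signs when `∑ a_i = 2b`. -/
theorem stmt10 (n t : ℕ) (hn : 1 ≤ n) (ht : 1 ≤ t) (htn : t ≤ n)
    (a : Fin n → ℝ) (hpos : ∀ i : Fin n, (i : ℕ) < t → 0 < a i)
    (hzero : ∀ i : Fin n, t ≤ (i : ℕ) → a i = 0) (b : ℝ)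
    (hspan : Module.finrank ℝ
      (affineSpan ℝ ({x : Fin n → ℝ | ∀ i, x i = 0 ∨ x i = 1} ∩
        {x | ∑ i, a i * x i = b})).direction = n - 1)
    (π : Equiv.Perm (Fin n)) (ε : Fin n → Bool) :
    (fun x : Fin n → ℝ => fun i => if ε i then 1 - x (π i) else x (π i)) ''
        {x | ∑ i, a i * x i = b} = {x | ∑ i, a i * x i = b} ↔
      (∀ i : Fin n, (i : ℕ) < t → a (π i) = a i) ∧
        ((∀ i : Fin n, (i : ℕ) < t → ε i = false) ∨
          ((∀ i : Fin n, (i : ℕ) < t → ε i = true) ∧ ∑ i, a i = 2 * b)) :=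
  stmt10_general n t hn ht a hpos hzero b π ε
end

section
/- Let t ≥ 1, let a : Fin t → ℕ, let π be a permutation of Fin t, and let b : ℕ. Then the number of functions x : Fin t → ℕ with x i ≤ 1 for all i, with x (π i) = x i for all i (x is fixed by π), and with ∑ i, a i * x i = b, equals the coefficient of X^b in the polynomial ∏_{o} (1 + X^{A_o}), where the product runs over the orbits o of π on Fin t and A_o = ∑_{i ∈ o} a i. -/
/-!
A 0/1-vector fixed by `π` is constant on the cycles of `π`, hence the indicator of a union of
cycles, and its weight `∑ a_i x_i` is the total weight of those cycles. Expanding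
`∏_o (1 + X^{A_o})` as a sum over sets of cycles, the coefficient of `X^b` counts exactly the sets
of cycles of total weight `b`.
-/

open Finset Polynomial

theorem Polynomial.coeff_prod_one_add_X_pow {κ : Type*} (s : Finset κ) (A : κ → ℕ) (b : ℕ) :
    (∏ k ∈ s, (1 + X ^ A k) : ℕ[X]).coeff b = #{u ∈ s.powerset | ∑ k ∈ u, A k = b} := by
  simp only [prod_one_add, prod_pow_eq_pow_sum, finsetSum_coeff, coeff_X_pow, card_filter,
    eq_comm (a := b)]

theorem Equiv.Perm.SameCycle.apply_eq_of_invariant {α β : Type*} [Finite α]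
    {π : Equiv.Perm α} {x : α → β} (hx : ∀ i, x (π i) = x i) {i j : α}
    (h : π.SameCycle i j) : x j = x i := by
  obtain ⟨n, rfl⟩ := h.exists_nat_pow_eq
  have hsemiconj : Function.Semiconj x π id := hx
  simpa [Equiv.Perm.coe_pow] using hsemiconj.iterate_right n i

namespace Finpartition

variable {ι : Type*} [Fintype ι] [DecidableEq ι] (P : Finpartition (univ : Finset ι))

def indicator (S : Finset (Finset ι)) (i : ι) : ℕ :=
  if P.part i ∈ S then 1 else 0

def onesParts (x : ι → ℕ) : Finset (Finset ι) :=
  {p ∈ P.parts | ∀ i ∈ p, x i = 1}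

lemma part_eq_part_of_mem_part {i j : ι} (h : j ∈ P.part i) : P.part j = P.part i :=
  P.part_eq_of_mem (P.part_mem.2 (mem_univ i)) h

lemma indicator_le_one (S : Finset (Finset ι)) (i : ι) : P.indicator S i ≤ 1 := by
  unfold indicator; split_ifs <;> omega

lemma indicator_eq_of_mem_part (S : Finset (Finset ι)) {i j : ι} (h : j ∈ P.part i) :
    P.indicator S j = P.indicator S i := by
  rw [indicator, indicator, P.part_eq_part_of_mem_part h]

lemma part_mem_iff_mem_biUnion {S : Finset (Finset ι)} (hS : S ⊆ P.parts) (i : ι) :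
    P.part i ∈ S ↔ i ∈ S.biUnion id := by
  rw [mem_biUnion]
  refine ⟨fun h => ⟨_, h, P.mem_part (mem_univ i)⟩, ?_⟩
  rintro ⟨p, hp, hip⟩
  rwa [P.part_eq_of_mem (hS hp) hip]

lemma sum_mul_indicator (a : ι → ℕ) {S : Finset (Finset ι)} (hS : S ⊆ P.parts) :
    ∑ i, a i * P.indicator S i = ∑ p ∈ S, ∑ i ∈ p, a i := by
  calc ∑ i, a i * P.indicator S i = ∑ i ∈ S.biUnion id, a i := by
        simp only [indicator, mul_ite, mul_one, mul_zero, ← sum_filter,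
          P.part_mem_iff_mem_biUnion hS, filter_mem_eq_inter, univ_inter]
    _ = ∑ p ∈ S, ∑ i ∈ p, a i := sum_biUnion (P.disjoint.subset hS)

lemma onesParts_subset (x : ι → ℕ) : P.onesParts x ⊆ P.parts :=
  filter_subset _ _

lemma onesParts_indicator {S : Finset (Finset ι)} (hS : S ⊆ P.parts) :
    P.onesParts (P.indicator S) = S := by
  ext p
  simp only [onesParts, indicator, mem_filter, ite_eq_left_iff, zero_ne_one, imp_false,
    not_not]
  refine ⟨fun ⟨hp, h⟩ => ?_, fun hpS => ⟨hS hpS, fun i hi => ?_⟩⟩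
  · obtain ⟨i, hi⟩ := P.nonempty_of_mem_parts hp
    simpa [P.part_eq_of_mem hp hi] using h i hi
  · rwa [P.part_eq_of_mem (hS hpS) hi]

lemma indicator_onesParts {x : ι → ℕ} (hx : ∀ i, x i ≤ 1)
    (hconst : ∀ i, ∀ j ∈ P.part i, x j = x i) : P.indicator (P.onesParts x) = x := by
  funext i
  have hpart : P.part i ∈ P.onesParts x ↔ x i = 1 := by
    simp only [onesParts, mem_filter, P.part_mem.2 (mem_univ i), true_and]
    exact ⟨fun h => h i (P.mem_part (mem_univ i)), fun h j hj => (hconst i j hj).trans h⟩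
  have := hx i
  simp only [indicator, hpart]
  split_ifs <;> omega

theorem ncard_binary_constOnParts_eq_coeff (a : ι → ℕ) (b : ℕ) :
    {x : ι → ℕ | (∀ i, x i ≤ 1) ∧ (∀ i, ∀ j ∈ P.part i, x j = x i) ∧ ∑ i, a i * x i = b}.ncard =
      (∏ p ∈ P.parts, (1 + X ^ ∑ i ∈ p, a i) : ℕ[X]).coeff b := by
  set F := {S ∈ P.parts.powerset | ∑ p ∈ S, ∑ i ∈ p, a i = b}
  have hF : ∀ {S}, S ∈ F ↔ S ⊆ P.parts ∧ ∑ p ∈ S, ∑ i ∈ p, a i = b := by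
    simp [F]
  have himage : {x : ι → ℕ | (∀ i, x i ≤ 1) ∧ (∀ i, ∀ j ∈ P.part i, x j = x i) ∧
      ∑ i, a i * x i = b} = P.indicator '' F := by
    ext x
    constructor
    · rintro ⟨hx, hconst, hsum⟩
      have hind := P.indicator_onesParts hx hconst
      refine ⟨P.onesParts x, hF.2 ⟨P.onesParts_subset x, ?_⟩, hind⟩
      rw [← P.sum_mul_indicator a (P.onesParts_subset x), hind, hsum]
    · rintro ⟨S, hS, rfl⟩
      obtain ⟨hSparts, hSsum⟩ := hF.1 hS
      exact ⟨P.indicator_le_one S, fun i j => P.indicator_eq_of_mem_part S,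
        (P.sum_mul_indicator a hSparts).trans hSsum⟩
  have hinj : Set.InjOn P.indicator F := fun S hS S' hS' h => by
    rw [← P.onesParts_indicator (hF.1 hS).1, h, P.onesParts_indicator (hF.1 hS').1]
  rw [himage, hinj.ncard_image, Set.ncard_coe_finset, coeff_prod_one_add_X_pow]

end Finpartition

open Classical

theorem stmt12_general (t : ℕ) (a : Fin t → ℕ)
    (π : Equiv.Perm (Fin t)) (b : ℕ) :
    {x : Fin t → ℕ | (∀ i, x i ≤ 1) ∧ (∀ i, x (π i) = x i) ∧
        ∑ i, a i * x i = b}.ncard =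
      Polynomial.coeff
        (∏ o ∈ Finset.univ.image
            (fun i : Fin t => Finset.univ.filter fun j => ∃ k : ℤ, (π ^ k) i = j),
          (1 + Polynomial.X ^ (∑ i ∈ o, a i)) : Polynomial ℕ) b := by
  set P := Finpartition.ofSetoid (Equiv.Perm.SameCycle.setoid π)
  have hmem : ∀ {i j}, j ∈ P.part i ↔ π.SameCycle i j := Finpartition.mem_part_ofSetoid_iff_rel
  have hparts : P.parts =
      univ.image (fun i : Fin t => univ.filter fun j => ∃ k : ℤ, (π ^ k) i = j) := by
    simp only [P, Finpartition.ofSetoid, Finpartition.ofSetSetoid_parts]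
    rfl
  have hfixed : ∀ x : Fin t → ℕ,
      (∀ i, x (π i) = x i) ↔ ∀ i, ∀ j ∈ P.part i, x j = x i := fun x =>
    ⟨fun hx i j hj => (hmem.1 hj).apply_eq_of_invariant hx,
      fun h i => h i (π i) (hmem.2 (Equiv.Perm.sameCycle_apply_right.2 (.refl π i)))⟩
  simp only [hfixed, ← hparts]
  exact P.ncard_binary_constOnParts_eq_coeff a b

/-- Theorem 6.4 (first case): the number of 0/1-vectors on the hyperplane
`∑ a_i x_i = b` fixed by the permutation `π` equals the coefficient of `X^b`
in `∏_{orbits o of π} (1 + X^{∑_{i ∈ o} a_i})`. -/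
theorem stmt12 (t : ℕ) (ht : 1 ≤ t) (a : Fin t → ℕ)
    (π : Equiv.Perm (Fin t)) (b : ℕ) :
    {x : Fin t → ℕ | (∀ i, x i ≤ 1) ∧ (∀ i, x (π i) = x i) ∧
        ∑ i, a i * x i = b}.ncard =
      Polynomial.coeff
        (∏ o ∈ Finset.univ.image
            (fun i : Fin t => Finset.univ.filter fun j => ∃ k : ℤ, (π ^ k) i = j),
          (1 + Polynomial.X ^ (∑ i ∈ o, a i)) : Polynomial ℕ) b :=
  stmt12_general t a π b
end

section
/- Let t ≥ 1 and let π be a permutation of Fin t. Then the number of functions x : Fin t → ℝ with x i ∈ {0, 1} for all i and satisfying x i = 1 - x (π i) for all i equals 2^c if every orbit of π on Fin t has even cardinality (where c is the number of orbits of π on Fin t), and equals 0 if some orbit of π has odd cardinality. -/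
/-!
Writing a 0/1-vector as `y : α → Bool`, the condition `x i = 1 - x (π i)` says
`y ∘ π = not ∘ y`, so `y` alternates along every cycle of `π` and no solution exists when a
cycle is odd. When all cycles are even, colouring each point by the parity of its distance from
a chosen point of its cycle gives a solution `y₀`, and `y ↦ y xor y₀` identifies the solutions
with the `π`-invariant functions `α → Bool`, that is, with the functions on the set of cycles.
-/

open Classical Function Finset

theorem Setoid.card_image_filter {α : Type*} [Fintype α] [DecidableEq α] (s : Setoid α)
    [DecidableRel s] :
    (univ.image fun i => univ.filter (s i)).card = Nat.card (Quotient s) := by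
  let cls : Quotient s → Finset α := Quotient.lift (fun i => univ.filter (s i)) fun i j hij => by
    ext x
    simp only [mem_filter, mem_univ, true_and]
    exact ⟨s.trans (s.symm hij), s.trans hij⟩
  have hinj : Injective cls := by
    rintro ⟨i⟩ ⟨j⟩ h
    have : j ∈ cls ⟦i⟧ := h ▸ mem_filter.mpr ⟨mem_univ j, s.refl j⟩
    exact Quotient.sound (mem_filter.mp this).2
  calc (univ.image fun i => univ.filter (s i)).card
      = ((univ.image (Quotient.mk s)).image cls).card := by rw [image_image]; rfl
    _ = Nat.card (Quotient s) := by
      rw [image_univ_of_surjective Quotient.mk_surjective, card_image_of_injective _ hinj,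
        card_univ, Nat.card_eq_fintype_card]

namespace Equiv.Perm

variable {α : Type*} (π : Perm α)

theorem not_semiconj_not_of_odd_minimalPeriod {i : α} (hi : Odd (minimalPeriod π i))
    (y : α → Bool) : ¬ Semiconj y π not := by
  intro hy
  have h := hy.iterate_right (minimalPeriod π i) i
  rw [(isPeriodicPt_minimalPeriod π i).eq, Bool.involutive_not.iterate_odd hi] at h
  simp at h

theorem odd_iff_odd_of_zpow_apply_eq {r : α} (hr : Even (minimalPeriod π r)) {a b : ℤ}
    (h : (π ^ a) r = (π ^ b) r) : Odd a ↔ Odd b := by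
  have hfix : (π ^ (a - b)) r = r := (π ^ b).injective <| by
    rw [← mul_apply, ← zpow_add, add_sub_cancel, h]
  have hdvd : (minimalPeriod π r : ℤ) ∣ a - b :=
    (MulAction.zpow_smul_eq_iff_minimalPeriod_dvd (a := π) (b := r)).mp hfix
  have h2 : (2 : ℤ) ∣ a - b := (Int.natCast_dvd_natCast.mpr hr.two_dvd).trans hdvd
  rw [Int.odd_iff, Int.odd_iff]
  omega

theorem exists_semiconj_not_of_even_minimalPeriod (h : ∀ i, Even (minimalPeriod π i)) :
    ∃ y : α → Bool, Semiconj y π not := by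
  let rep (i : α) : α := (Quotient.mk (SameCycle.setoid π) i).out
  have hrep (i : α) : rep (π i) = rep i :=
    congrArg Quotient.out (Quotient.sound (sameCycle_apply_left.mpr (SameCycle.refl π i)))
  choose k hk using fun i =>
    (Quotient.mk_out (s := SameCycle.setoid π) i : SameCycle π (rep i) i)
  refine ⟨fun i => decide (Odd (k i)), fun i => ?_⟩
  have hpow : (π ^ k (π i)) (rep i) = (π ^ (1 + k i)) (rep i) := by
    rw [← hrep, hk, zpow_one_add, mul_apply, hrep, hk]
  simp [odd_iff_odd_of_zpow_apply_eq π (h _) hpow, parity_simps, ← Int.not_odd_iff_even]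

def semiconjNotEquivSemiconjId {y₀ : α → Bool} (h₀ : Semiconj y₀ π not) :
    {y : α → Bool // Semiconj y π not} ≃ {z : α → Bool // Semiconj z π id} where
  toFun y := ⟨fun i => xor (y.1 i) (y₀ i), fun i => by simp [y.2 i, h₀ i]⟩
  invFun z := ⟨fun i => xor (z.1 i) (y₀ i), fun i => by simp [z.2 i, h₀ i]⟩
  left_inv y := by ext; simp
  right_inv z := by ext; simp

theorem semiconj_id_iff_sameCycle_setoid_le_ker [Finite α] {β : Type*} {z : α → β} :
    Semiconj z π id ↔ SameCycle.setoid π ≤ Setoid.ker z := by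
  refine ⟨fun hz i j hij => ?_, fun hz i => hz (sameCycle_apply_left.mpr (.refl π i))⟩
  obtain ⟨n, rfl⟩ := hij.exists_nat_pow_eq
  rw [Setoid.ker_def, ← iterate_eq_pow, hz.iterate_right n i, iterate_id, id]

theorem card_filter_zpow_apply_eq [Fintype α] (i : α) :
    (univ.filter fun j => ∃ k : ℤ, (π ^ k) i = j).card = minimalPeriod π i := by
  rw [show minimalPeriod π i = _ from MulAction.minimalPeriod_eq_card (a := π) (b := i),
    ← Set.toFinset_card]
  congr 1
  ext j
  simp [MulAction.mem_orbit_iff, Subgroup.smul_def, Perm.smul_def]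

theorem card_semiconj_not [Finite α] :
    Nat.card {y : α → Bool // Semiconj y π not} =
      if ∀ i, Even (minimalPeriod π i) then 2 ^ Nat.card (Quotient (SameCycle.setoid π))
      else 0 := by
  split_ifs with h
  · obtain ⟨y₀, h₀⟩ := exists_semiconj_not_of_even_minimalPeriod π h
    have e : {y : α → Bool // Semiconj y π not} ≃ (Quotient (SameCycle.setoid π) → Bool) :=
      (semiconjNotEquivSemiconjId π h₀).trans <|
        (Equiv.subtypeEquivRight fun _ => semiconj_id_iff_sameCycle_setoid_le_ker π).trans
          (Setoid.liftEquiv _)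
    rw [Nat.card_congr e, Nat.card_fun, Nat.card_eq_fintype_card (α := Bool), Fintype.card_bool]
  · push Not at h
    obtain ⟨i, hi⟩ := h
    have : IsEmpty {y : α → Bool // Semiconj y π not} :=
      ⟨fun y => not_semiconj_not_of_odd_minimalPeriod π (Nat.not_even_iff_odd.mp hi) y.1 y.2⟩
    exact Nat.card_of_isEmpty

theorem ncard_zero_one_fixed_eq_card_semiconj_not :
    {x : α → ℝ | (∀ i, x i = 0 ∨ x i = 1) ∧ ∀ i, x i = 1 - x (π i)}.ncard =
      Nat.card {y : α → Bool // Semiconj y π not} := by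
  let toReal (y : α → Bool) (i : α) : ℝ := if y i then 1 else 0
  have hinj : Injective toReal := fun y z h => funext fun i => by
    have := congrFun h i
    cases hy : y i <;> cases hz : z i <;> simp_all [toReal]
  have hset : {x : α → ℝ | (∀ i, x i = 0 ∨ x i = 1) ∧ ∀ i, x i = 1 - x (π i)} =
      toReal '' {y | Semiconj y π not} := by
    ext x
    constructor
    · rintro ⟨h01, hx⟩
      refine ⟨fun i => decide (x i = 1), fun i => ?_, funext fun i => ?_⟩
      · have := hx i
        rcases h01 i with h | h <;> rcases h01 (π i) with h' | h' <;> simp [h, h'] at this ⊢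
      · rcases h01 i with h | h <;> simp [toReal, h]
    · rintro ⟨y, hy, rfl⟩
      refine ⟨fun i => by cases y i <;> simp [toReal], fun i => ?_⟩
      simp only [toReal, hy i]
      cases y i <;> norm_num
  rw [hset, Set.ncard_image_of_injective _ hinj, ← Nat.card_coe_set_eq]
  rfl

end Equiv.Perm

theorem stmt13_general (t : ℕ) (π : Equiv.Perm (Fin t)) :
    {x : Fin t → ℝ | (∀ i, x i = 0 ∨ x i = 1) ∧ ∀ i, x i = 1 - x (π i)}.ncard =
      if ∀ o ∈ Finset.univ.image
          (fun i : Fin t => Finset.univ.filter fun j => ∃ k : ℤ, (π ^ k) i = j),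
          Even o.card
      then 2 ^ (Finset.univ.image
          (fun i : Fin t => Finset.univ.filter fun j => ∃ k : ℤ, (π ^ k) i = j)).card
      else 0 := by
  rw [π.ncard_zero_one_fixed_eq_card_semiconj_not, π.card_semiconj_not,
    ← Setoid.card_image_filter]
  simp only [forall_mem_image, mem_univ, forall_const, π.card_filter_zpow_apply_eq]
  congr!

/-- Theorem 6.4 (second case, counting part): the number of 0/1-vectors fixed
by the all-negative signed permutation with underlying permutation `π` is
`2^(number of orbits)` if all orbits of `π` are even, and `0` otherwise. -/
theorem stmt13 (t : ℕ) (ht : 1 ≤ t) (π : Equiv.Perm (Fin t)) :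
    {x : Fin t → ℝ | (∀ i, x i = 0 ∨ x i = 1) ∧ ∀ i, x i = 1 - x (π i)}.ncard =
      if ∀ o ∈ Finset.univ.image
          (fun i : Fin t => Finset.univ.filter fun j => ∃ k : ℤ, (π ^ k) i = j),
          Even o.card
      then 2 ^ (Finset.univ.image
          (fun i : Fin t => Finset.univ.filter fun j => ∃ k : ℤ, (π ^ k) i = j)).card
      else 0 :=
  stmt13_general t π
end

section
/- Let n ≥ 1 and 2^(n-2) < k. Let P and P' be subsets of {0,1}^n ⊆ (Fin n → ℝ) with |P| = k and more than 2^(n-2) elements each, let H and H' be affine hyperplanes in ℝ^n (affine subspaces whose directions have dimension n-1) with P ⊆ H and P' ⊆ H', and let f : (Fin n → ℝ) → (Fin n → ℝ) be a signed permutation symmetry (given by a permutation π of Fin n and ε : Fin n → Bool via (f x) i = x(π i) if ε i = false and 1 - x(π i) if ε i = true) such that f '' P = P'. Then f maps H onto H', i.e., f '' H = H'. -/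
open Module Set

/-!
A set `S` of 0/1 points whose affine span has dimension `d` has at most `2 ^ d` elements: some
`d` coordinates already determine the points of the span, and on those coordinates a point of `S`
is one of `2 ^ d` patterns. Hence a set of more than `2 ^ (n - 2)` vertices of the cube lying in a
hyperplane spans that hyperplane, and the affine symmetry carrying `P` onto `P'` carries the
span of `P` onto the span of `P'`.
-/

theorem Submodule.exists_card_le_finrank_determining_finset
    {K ι : Type*} [Field K] (V : Submodule K (ι → K)) [FiniteDimensional K V] :
    ∃ J : Finset ι, J.card ≤ finrank K V ∧ ∀ v ∈ V, (∀ j ∈ J, v j = 0) → v = 0 := by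
  classical
  let coord : ι → Dual K V := fun i => (LinearMap.proj i).comp V.subtype
  obtain ⟨κ, a, -, hspan, hli⟩ := exists_linearIndependent' K coord
  have : Finite κ := hli.finite
  have : Fintype κ := Fintype.ofFinite κ
  refine ⟨Finset.univ.image a, ?_, fun v hv hJ => ?_⟩
  · calc (Finset.univ.image a).card ≤ Fintype.card κ := Finset.card_image_le
      _ ≤ finrank K (Dual K V) := hli.fintype_card_le_finrank
      _ = finrank K V := Subspace.dual_finrank_eq
  · -- every coordinate functional lies in the span of the chosen ones, which all vanish at `v`
    have hker : Submodule.span K (range coord) ≤ LinearMap.ker (Dual.eval K V ⟨v, hv⟩) := by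
      rw [← hspan, Submodule.span_le]
      rintro _ ⟨t, rfl⟩
      exact hJ (a t) (Finset.mem_image_of_mem a (Finset.mem_univ t))
    funext i
    exact hker (Submodule.subset_span ⟨i, rfl⟩)

theorem ncard_le_two_pow_finrank_direction_affineSpan {K ι : Type*} [Field K] [Finite ι]
    {S : Set (ι → K)} (hS : ∀ x ∈ S, ∀ i, x i = 0 ∨ x i = 1) :
    S.ncard ≤ 2 ^ finrank K (affineSpan K S).direction := by
  classical
  obtain ⟨J, hJcard, hJ⟩ :=
    (affineSpan K S).direction.exists_card_le_finrank_determining_finset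
  -- a point of `S` is determined by its 0/1 pattern on `J`
  let pattern : (ι → K) → J → Bool := fun x j => decide (x j = 1)
  have hinj : InjOn pattern S := by
    intro x hx y hy hxy
    refine sub_eq_zero.mp (hJ _ ?_ fun j hj => ?_)
    · exact AffineSubspace.vsub_mem_direction (subset_affineSpan K S hx) (subset_affineSpan K S hy)
    · have := congrFun hxy ⟨j, hj⟩
      rcases hS x hx j with h | h <;> rcases hS y hy j with h' | h' <;> simp_all [pattern]
  calc S.ncard ≤ (univ : Set (J → Bool)).ncard := ncard_le_ncard_of_injOn pattern (by simp) hinj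
    _ = 2 ^ J.card := by simp [ncard_univ]
    _ ≤ 2 ^ finrank K (affineSpan K S).direction := Nat.pow_le_pow_right two_pos hJcard

theorem affineSpan_eq_of_two_pow_lt_ncard {K ι : Type*} [Field K] [Finite ι]
    {S : Set (ι → K)} (hS : ∀ x ∈ S, ∀ i, x i = 0 ∨ x i = 1) {A : AffineSubspace K (ι → K)}
    (hSA : S ⊆ A) (hcard : 2 ^ (finrank K A.direction - 1) < S.ncard) :
    affineSpan K S = A := by
  have hle : affineSpan K S ≤ A := affineSpan_le.mpr hSA
  have hdir : (affineSpan K S).direction ≤ A.direction := AffineSubspace.direction_le hle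
  have hfinrank : finrank K A.direction ≤ finrank K (affineSpan K S).direction := by
    by_contra! hlt
    have := (ncard_le_two_pow_finrank_direction_affineSpan hS).trans
      (Nat.pow_le_pow_right two_pos (Nat.le_sub_one_of_lt hlt))
    omega
  refine AffineSubspace.eq_of_direction_eq_of_nonempty_of_le
    (Submodule.eq_of_le_of_finrank_le hdir hfinrank) ?_ hle
  exact (affineSpan_nonempty K).mpr
    (nonempty_of_ncard_ne_zero ((Nat.zero_le _).trans_lt hcard).ne')

noncomputable def signedPermAffineMap {R ι : Type*} [Ring R] (π : Equiv.Perm ι) (ε : ι → Bool) :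
    (ι → R) →ᵃ[R] (ι → R) where
  toFun x i := if ε i then 1 - x (π i) else x (π i)
  linear :=
    { toFun := fun x i => if ε i then -x (π i) else x (π i)
      map_add' := fun x y => by funext i; by_cases h : ε i <;> simp [h, add_comm]
      map_smul' := fun c x => by funext i; by_cases h : ε i <;> simp [h] }
  map_vadd' p v := by funext i; by_cases h : ε i <;> simp [h]; abel

theorem coe_signedPermAffineMap {R ι : Type*} [Ring R] (π : Equiv.Perm ι) (ε : ι → Bool) :
    ⇑(signedPermAffineMap (R := R) π ε) = fun x i => if ε i then 1 - x (π i) else x (π i) :=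
  rfl

theorem stmt15_general (n k : ℕ) (hk : 2 ^ (n - 2) < k)
    (P P' : Set (Fin n → ℝ))
    (hP : ∀ x ∈ P, ∀ i, x i = 0 ∨ x i = 1)
    (hP' : ∀ x ∈ P', ∀ i, x i = 0 ∨ x i = 1)
    (hPcard : P.ncard = k) (hP'card : 2 ^ (n - 2) < P'.ncard)
    (H H' : AffineSubspace ℝ (Fin n → ℝ))
    (hH : Module.finrank ℝ H.direction = n - 1)
    (hH' : Module.finrank ℝ H'.direction = n - 1)
    (hPH : P ⊆ (H : Set (Fin n → ℝ))) (hPH' : P' ⊆ (H' : Set (Fin n → ℝ)))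
    (π : Equiv.Perm (Fin n)) (ε : Fin n → Bool)
    (hf : (fun x : Fin n → ℝ => fun i => if ε i then 1 - x (π i) else x (π i)) ''
        P = P') :
    (fun x : Fin n → ℝ => fun i => if ε i then 1 - x (π i) else x (π i)) ''
        (H : Set (Fin n → ℝ)) = (H' : Set (Fin n → ℝ)) := by
  have hspan : affineSpan ℝ P = H :=
    affineSpan_eq_of_two_pow_lt_ncard hP hPH (by rwa [hH, hPcard])
  have hspan' : affineSpan ℝ P' = H' :=
    affineSpan_eq_of_two_pow_lt_ncard hP' hPH' (by rwa [hH'])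
  rw [← coe_signedPermAffineMap] at hf ⊢
  rw [← hspan, ← hspan', ← hf, ← AffineSubspace.map_span, AffineSubspace.coe_map]

/-- Case 2 in the proof of Theorem 4.1: a hypercube symmetry carrying a large
vertex set `P ⊆ H` onto `P' ⊆ H'` carries the hyperplane `H` onto `H'`. -/
theorem stmt15 (n k : ℕ) (hn : 1 ≤ n) (hk : 2 ^ (n - 2) < k)
    (P P' : Set (Fin n → ℝ))
    (hP : ∀ x ∈ P, ∀ i, x i = 0 ∨ x i = 1)
    (hP' : ∀ x ∈ P', ∀ i, x i = 0 ∨ x i = 1)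
    (hPcard : P.ncard = k) (hP'card : 2 ^ (n - 2) < P'.ncard)
    (H H' : AffineSubspace ℝ (Fin n → ℝ))
    (hH : Module.finrank ℝ H.direction = n - 1)
    (hH' : Module.finrank ℝ H'.direction = n - 1)
    (hPH : P ⊆ (H : Set (Fin n → ℝ))) (hPH' : P' ⊆ (H' : Set (Fin n → ℝ)))
    (π : Equiv.Perm (Fin n)) (ε : Fin n → Bool)
    (hf : (fun x : Fin n → ℝ => fun i => if ε i then 1 - x (π i) else x (π i)) ''
        P = P') :
    (fun x : Fin n → ℝ => fun i => if ε i then 1 - x (π i) else x (π i)) ''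
        (H : Set (Fin n → ℝ)) = (H' : Set (Fin n → ℝ)) :=
  stmt15_general n k hk P P' hP hP' hPcard hP'card H H' hH hH' hPH hPH' π ε hf
end
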